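/- There exist universal constants c₁, c₂ > 0 such that for every p ∈ (0,1), every δ ∈ (0,1), and every integer n ≥ c₁ log(2/δ)/(p(1−p)): if y_1,…,y_n are i.i.d. Bernoulli(p) with sample mean ȳ_n = (1/n)Σ_{i=1}^n y_i, then P(KL(p ‖ ȳ_n) ≤ c₂ log(2/δ)/n) ≥ 1 − δ. -/

import Mathlib

/-!
Chernoff's bound at the optimal exponential tilt gives
`P(ȳ ≥ p + ε), P(ȳ ≤ p - ε) ≤ exp (-n KL(p ± ε ‖ p))`. Writing
`KL(q ‖ p) = p φ(q / p) + (1 - p) φ((1 - q) / (1 - p))` with `φ x = x log x + 1 - x`, quadratic bounds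
on `φ` give `KL(p ± ε ‖ p) ≥ 4 ε² / (9 p (1 - p))` for `ε ≤ min p (1 - p) / 4`, and
`KL(p ‖ m) ≤ (p - m)² / (m (1 - m))`. With `ε² = 9 p (1 - p) log (2 / δ) / (4 n)` the sample mean is
within `ε` of `p` with probability at least `1 - δ`, and there
`KL(p ‖ ȳ) ≤ 16 ε² / (9 p (1 - p)) = 4 log (2 / δ) / n`; the condition
`n ≥ 36 log (2 / δ) / (p (1 - p))` is exactly `ε ≤ p (1 - p) / 4`.
-/

open MeasureTheory ProbabilityTheory
open scoped ENNReal

universe u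

/-- Bernoulli distribution on `ℝ` with mean `p`. -/
noncomputable def bern (p : ℝ) : Measure ℝ :=
  ENNReal.ofReal p • Measure.dirac 1 + ENNReal.ofReal (1 - p) • Measure.dirac 0

/-- Real-valued Bernoulli KL divergence (with `0 * log 0 = 0`). -/
noncomputable def klBer (q p : ℝ) : ℝ :=
  q * Real.log (q / p) + (1 - q) * Real.log ((1 - q) / (1 - p))

/-- Extended Bernoulli KL divergence on `[0,1]`, with `KL(q ‖ p) = ∞` when `p ∈ {0,1}`, `q ≠ p`. -/
noncomputable def klBerE (q p : ℝ) : ℝ≥0∞ :=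
  if (p = 0 ∧ q ≠ 0) ∨ (p = 1 ∧ q ≠ 1) then ⊤ else ENNReal.ofReal (klBer q p)

open Real InformationTheory

lemma isProbabilityMeasure_bern {p : ℝ} (hp0 : 0 ≤ p) (hp1 : p ≤ 1) :
    IsProbabilityMeasure (bern p) :=
  ⟨by simp [bern, ← ENNReal.ofReal_add hp0 (sub_nonneg.mpr hp1)]⟩

instance isFiniteMeasure_bern (p : ℝ) : IsFiniteMeasure (bern p) :=
  ⟨by simp [bern, ENNReal.add_lt_top]⟩

lemma integrable_bern (p : ℝ) (f : ℝ → ℝ) : Integrable f (bern p) :=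
  ((integrable_dirac (f := f) enorm_lt_top).smul_measure ENNReal.ofReal_ne_top).add_measure
    ((integrable_dirac (f := f) enorm_lt_top).smul_measure ENNReal.ofReal_ne_top)

lemma integral_bern {p : ℝ} (hp0 : 0 ≤ p) (hp1 : p ≤ 1) (f : ℝ → ℝ) :
    ∫ x, f x ∂bern p = p * f 1 + (1 - p) * f 0 := by
  have hdirac (a : ℝ) (c : ℝ≥0∞) (hc : c ≠ ∞) : Integrable f (c • Measure.dirac a) :=
    (integrable_dirac enorm_lt_top).smul_measure hc
  rw [bern, integral_add_measure (hdirac 1 _ ENNReal.ofReal_ne_top)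
      (hdirac 0 _ ENNReal.ofReal_ne_top), integral_smul_measure, integral_smul_measure,
    integral_dirac, integral_dirac, ENNReal.toReal_ofReal hp0,
    ENNReal.toReal_ofReal (sub_nonneg.mpr hp1), smul_eq_mul, smul_eq_mul]

lemma mgf_bern {p : ℝ} (hp0 : 0 ≤ p) (hp1 : p ≤ 1) (t : ℝ) :
    mgf id (bern p) t = 1 - p + p * exp t := by
  rw [mgf, integral_bern hp0 hp1]
  simp only [id, mul_one, mul_zero, exp_zero]
  ring

lemma mgf_sum_pi {ι : Type*} [Fintype ι] (μ : Measure ℝ) [SigmaFinite μ] (t : ℝ) :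
    mgf (fun x : ι → ℝ => ∑ i, x i) (Measure.pi fun _ => μ) t
      = mgf id μ t ^ Fintype.card ι := by
  simp only [mgf, Finset.mul_sum, exp_sum, id]
  exact integral_fintype_prod_eq_pow (ι := ι) (fun x => exp (t * x))

lemma integrable_exp_mul_sum_pi_bern {ι : Type*} [Fintype ι] (p t : ℝ) :
    Integrable (fun x : ι → ℝ => exp (t * ∑ i, x i)) (Measure.pi fun _ => bern p) := by
  simp only [Finset.mul_sum, exp_sum]
  exact Integrable.fintype_prod (f := fun _ x => exp (t * x)) fun _ => integrable_bern p _

-- The Chernoff parameter optimal for the threshold `q`: `exp t = q (1 - p) / (p (1 - q))`.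
noncomputable def bernTilt (q p : ℝ) : ℝ := log (q / p) - log ((1 - q) / (1 - p))

lemma bernTilt_nonneg {p q : ℝ} (hp : 0 < p) (hpq : p ≤ q) (hq1 : q < 1) :
    0 ≤ bernTilt q p := by
  have : log ((1 - q) / (1 - p)) ≤ 0 :=
    log_nonpos (div_nonneg (by linarith) (by linarith))
      ((div_le_one (by linarith)).mpr (by linarith))
  have : 0 ≤ log (q / p) := log_nonneg ((le_div_iff₀ hp).mpr (by linarith))
  unfold bernTilt; linarith

lemma bernTilt_nonpos {p q : ℝ} (hq : 0 < q) (hqp : q ≤ p) (hp1 : p < 1) :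
    bernTilt q p ≤ 0 := by
  have : 0 ≤ log ((1 - q) / (1 - p)) :=
    log_nonneg ((le_div_iff₀ (by linarith)).mpr (by linarith))
  have : log (q / p) ≤ 0 :=
    log_nonpos (div_nonneg hq.le (by linarith)) ((div_le_one (by linarith)).mpr hqp)
  unfold bernTilt; linarith

lemma exp_neg_bernTilt_mul_mul_mgf_bern {p q : ℝ} (hp : 0 < p) (hp1 : p < 1) (hq : 0 < q)
    (hq1 : q < 1) :
    exp (-bernTilt q p * q) * (1 - p + p * exp (bernTilt q p)) = exp (-klBer q p) := by
  have h1p : 0 < 1 - p := by linarith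
  have h1q : 0 < 1 - q := by linarith
  have hmgf : 1 - p + p * exp (bernTilt q p) = exp (-log ((1 - q) / (1 - p))) := by
    rw [bernTilt, exp_sub, exp_log (by positivity), exp_log (by positivity), exp_neg,
      exp_log (by positivity)]
    field_simp
    ring
  rw [hmgf, ← exp_add, bernTilt, klBer]
  ring_nf

lemma exp_neg_bernTilt_mul_mul_mgf_bern_pow {p q : ℝ} (hp : 0 < p) (hp1 : p < 1) (hq : 0 < q)
    (hq1 : q < 1) (n : ℕ) :
    exp (-bernTilt q p * (n * q)) * (1 - p + p * exp (bernTilt q p)) ^ n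
      = exp (-(n * klBer q p)) := by
  calc _ = (exp (-bernTilt q p * q) * (1 - p + p * exp (bernTilt q p))) ^ n := by
        rw [mul_pow, ← exp_nat_mul]; ring_nf
    _ = _ := by rw [exp_neg_bernTilt_mul_mul_mgf_bern hp hp1 hq hq1, ← exp_nat_mul]; ring_nf

lemma measureReal_sum_ge_le_exp_neg_klBer {p q : ℝ} (hp : 0 < p) (hpq : p ≤ q) (hq1 : q < 1)
    (n : ℕ) :
    (Measure.pi fun _ : Fin n => bern p).real {x | n * q ≤ ∑ i, x i}
      ≤ exp (-(n * klBer q p)) := by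
  have := isProbabilityMeasure_bern hp.le (by linarith)
  have h := measure_ge_le_exp_mul_mgf (X := fun x : Fin n → ℝ => ∑ i, x i) (n * q)
    (bernTilt_nonneg hp hpq hq1) (integrable_exp_mul_sum_pi_bern p _)
  rw [mgf_sum_pi, mgf_bern hp.le (by linarith), Fintype.card_fin] at h
  exact h.trans_eq (exp_neg_bernTilt_mul_mul_mgf_bern_pow hp (by linarith) (by linarith) hq1 n)

lemma measureReal_sum_le_le_exp_neg_klBer {p q : ℝ} (hq : 0 < q) (hqp : q ≤ p) (hp1 : p < 1)
    (n : ℕ) :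
    (Measure.pi fun _ : Fin n => bern p).real {x | ∑ i, x i ≤ n * q}
      ≤ exp (-(n * klBer q p)) := by
  have := isProbabilityMeasure_bern (by linarith) hp1.le
  have h := measure_le_le_exp_mul_mgf (X := fun x : Fin n → ℝ => ∑ i, x i) (n * q)
    (bernTilt_nonpos hq hqp hp1) (integrable_exp_mul_sum_pi_bern p _)
  rw [mgf_sum_pi, mgf_bern (by linarith) hp1.le, Fintype.card_fin] at h
  exact h.trans_eq (exp_neg_bernTilt_mul_mul_mgf_bern_pow (by linarith) hp1 hq (by linarith) n)

lemma two_mul_div_add_two_le_log_one_add {a : ℝ} (ha : 0 ≤ a) :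
    2 * a / (a + 2) ≤ log (1 + a) := by
  have h := le_hasSum (hasSum_log_one_add ha) 0 fun k _ => by positivity
  simpa [mul_div_assoc] using h

lemma sub_inv_div_two_le_log {x : ℝ} (hx0 : 0 < x) (hx1 : x ≤ 1) :
    (x - x⁻¹) / 2 ≤ log x := by
  rw [← sinh_log hx0]
  exact sinh_le_self_iff.mpr (log_nonpos hx0.le hx1)

lemma klFun_le_sq_sub_one {x : ℝ} (hx : 0 ≤ x) : klFun x ≤ (x - 1) ^ 2 := by
  rcases hx.eq_or_lt with rfl | hx
  · simp [klFun_zero]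
  have := mul_le_mul_of_nonneg_left (log_le_sub_one_of_pos hx) hx.le
  rw [klFun_apply]
  nlinarith

lemma sq_div_le_klFun_of_one_le {x : ℝ} (hx : 1 ≤ x) : (x - 1) ^ 2 / (x + 1) ≤ klFun x := by
  have h := two_mul_div_add_two_le_log_one_add (sub_nonneg.mpr hx)
  rw [add_sub_cancel, show x - 1 + 2 = x + 1 by ring] at h
  have h' := mul_le_mul_of_nonneg_left h (by linarith : (0:ℝ) ≤ x)
  rw [klFun_apply]
  calc (x - 1) ^ 2 / (x + 1) = x * (2 * (x - 1) / (x + 1)) + 1 - x := by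
        field_simp; ring
    _ ≤ _ := by linarith

lemma sq_div_two_le_klFun_of_le_one {x : ℝ} (hx0 : 0 < x) (hx1 : x ≤ 1) :
    (x - 1) ^ 2 / 2 ≤ klFun x := by
  have h' := mul_le_mul_of_nonneg_left (sub_inv_div_two_le_log hx0 hx1) hx0.le
  rw [klFun_apply]
  calc (x - 1) ^ 2 / 2 = x * ((x - x⁻¹) / 2) + 1 - x := by
        field_simp; ring
    _ ≤ _ := by linarith

lemma klBer_eq_klFun {p : ℝ} (hp : 0 < p) (hp1 : p < 1) (q : ℝ) :
    klBer q p = p * klFun (q / p) + (1 - p) * klFun ((1 - q) / (1 - p)) := by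
  have h1p : 1 - p ≠ 0 := by linarith
  simp only [klBer, klFun_apply]
  field_simp
  ring

lemma klBer_flip (q p : ℝ) : klBer (1 - q) (1 - p) = klBer q p := by
  simp only [klBer, sub_sub_cancel]
  ring

lemma klBer_le_sq_div {p q : ℝ} (hq : 0 ≤ q) (hq1 : q ≤ 1) (hp : 0 < p) (hp1 : p < 1) :
    klBer q p ≤ (q - p) ^ 2 / (p * (1 - p)) := by
  have h1p : 0 < 1 - p := by linarith
  rw [klBer_eq_klFun hp hp1]
  calc _ ≤ p * (q / p - 1) ^ 2 + (1 - p) * ((1 - q) / (1 - p) - 1) ^ 2 := by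
        gcongr
        · exact klFun_le_sq_sub_one (by positivity)
        · exact klFun_le_sq_sub_one (div_nonneg (by linarith) h1p.le)
    _ = _ := by field_simp; ring

lemma le_klBer_add {p u : ℝ} (hp : 0 < p) (hu : 0 ≤ u) (hup : u ≤ p / 4) (hpu : p + u < 1) :
    4 * u ^ 2 / (9 * (p * (1 - p))) ≤ klBer (p + u) p := by
  have h1p : 0 < 1 - p := by linarith
  have hup' : 1 ≤ (p + u) / p := by rw [le_div_iff₀ hp]; linarith
  have hlow : 0 < (1 - (p + u)) / (1 - p) := div_pos (by linarith) h1p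
  have hlow1 : (1 - (p + u)) / (1 - p) ≤ 1 := by rw [div_le_one h1p]; linarith
  rw [klBer_eq_klFun hp (by linarith)]
  calc 4 * u ^ 2 / (9 * (p * (1 - p))) = u ^ 2 / (9 * p / 4) + u ^ 2 / (9 * (1 - p) / 4) := by
        field_simp; ring
    _ ≤ u ^ 2 / (2 * p + u) + u ^ 2 / (2 * (1 - p)) := by gcongr <;> linarith
    _ = p * (((p + u) / p - 1) ^ 2 / ((p + u) / p + 1))
          + (1 - p) * (((1 - (p + u)) / (1 - p) - 1) ^ 2 / 2) := by
        field_simp; ring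
    _ ≤ _ := by
        gcongr
        · exact sq_div_le_klFun_of_one_le hup'
        · exact sq_div_two_le_klFun_of_le_one hlow hlow1

lemma le_klBer_sub {p u : ℝ} (hp1 : p < 1) (hu : 0 ≤ u) (hup : u < p)
    (hu1p : u ≤ (1 - p) / 4) :
    4 * u ^ 2 / (9 * (p * (1 - p))) ≤ klBer (p - u) p := by
  have h := le_klBer_add (p := 1 - p) (by linarith) hu hu1p (by linarith)
  rw [sub_sub_cancel, mul_comm (1 - p)] at h
  rwa [← klBer_flip, show 1 - (p - u) = 1 - p + u by ring]

lemma klBer_le_of_abs_sub_lt {p m ε : ℝ} (hm : |m - p| < ε) (hεp : ε ≤ p / 4)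
    (hε1p : ε ≤ (1 - p) / 4) :
    klBer p m ≤ 16 * ε ^ 2 / (9 * (p * (1 - p))) := by
  obtain ⟨hmp, hpm⟩ := abs_lt.mp hm
  have hε : 0 < ε := (abs_nonneg _).trans_lt hm
  have hp : 0 < p := by linarith
  have hp1 : p < 1 := by linarith
  calc klBer p m ≤ (p - m) ^ 2 / (m * (1 - m)) :=
        klBer_le_sq_div hp.le hp1.le (by linarith) (by linarith)
    _ ≤ ε ^ 2 / (3 * p / 4 * (3 * (1 - p) / 4)) :=
        div_le_div₀ (sq_nonneg ε) (sq_le_sq' (by linarith) (by linarith)) (by positivity)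
          (mul_le_mul (by linarith) (by linarith) (by linarith) (by linarith))
    _ = _ := by field_simp; ring

lemma le_measureReal_abs_mean_sub_lt {p ε : ℝ} (hε : 0 < ε) (hεp : ε ≤ p / 4)
    (hε1p : ε ≤ (1 - p) / 4) {n : ℕ} (hn : 0 < n) :
    1 - 2 * exp (-(n * (4 * ε ^ 2 / (9 * (p * (1 - p)))))) ≤
      (Measure.pi fun _ : Fin n => bern p).real {x | |(∑ i, x i) / n - p| < ε} := by
  have hp : 0 < p := by linarith
  have hp1 : p < 1 := by linarith
  have hn' : (0 : ℝ) < n := Nat.cast_pos.mpr hn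
  have := isProbabilityMeasure_bern hp.le hp1.le
  have hupper := (measureReal_sum_ge_le_exp_neg_klBer hp (q := p + ε) (by linarith)
    (by linarith) n).trans (exp_le_exp.mpr (neg_le_neg (mul_le_mul_of_nonneg_left
      (le_klBer_add hp hε.le hεp (by linarith)) hn'.le)))
  have hlower := (measureReal_sum_le_le_exp_neg_klBer (q := p - ε) (by linarith) (by linarith)
    hp1 n).trans (exp_le_exp.mpr (neg_le_neg (mul_le_mul_of_nonneg_left
      (le_klBer_sub hp1 hε.le (by linarith) hε1p) hn'.le)))
  have hcompl : {x : Fin n → ℝ | |(∑ i, x i) / n - p| < ε}ᶜ ⊆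
      {x | ∑ i, x i ≤ n * (p - ε)} ∪ {x | n * (p + ε) ≤ ∑ i, x i} := by
    intro x hx
    simp only [Set.mem_compl_iff, Set.mem_ofPred_eq, not_lt, le_abs, Set.mem_union] at hx ⊢
    rcases hx with h | h
    · right
      rw [le_sub_iff_add_le, le_div_iff₀ hn'] at h
      linarith
    · left
      rw [neg_sub, le_sub_comm, div_le_iff₀ hn'] at h
      linarith
  have hmeas : MeasurableSet {x : Fin n → ℝ | |(∑ i, x i) / n - p| < ε} :=
    measurableSet_lt (by fun_prop) measurable_const
  linarith [probReal_compl_eq_one_sub (μ := Measure.pi fun _ : Fin n => bern p) hmeas,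
    measureReal_mono (μ := Measure.pi fun _ : Fin n => bern p) hcompl,
    measureReal_union_le (μ := Measure.pi fun _ : Fin n => bern p)
      {x : Fin n → ℝ | ∑ i, x i ≤ n * (p - ε)} {x | n * (p + ε) ≤ ∑ i, x i}]

lemma klBerE_of_mem_Ioo {q m : ℝ} (hm : m ∈ Set.Ioo 0 1) :
    klBerE q m = ENNReal.ofReal (klBer q m) :=
  if_neg (by rintro (⟨h, -⟩ | ⟨h, -⟩) <;> linarith [hm.1, hm.2])

lemma measurable_klBerE (q : ℝ) : Measurable (klBerE q) := by
  unfold klBerE klBer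
  refine Measurable.ite ?_ measurable_const (by fun_prop)
  measurability

lemma le_pi_bern_klBerE_mean_le {p L : ℝ} (hp : 0 < p) (hp1 : p < 1) (hL : 0 < L) {n : ℕ}
    (hn : 36 * L ≤ n * (p * (1 - p))) :
    ENNReal.ofReal (1 - 2 * exp (-L)) ≤ (Measure.pi fun _ : Fin n => bern p)
      {x | klBerE p ((∑ i, x i) / n) ≤ ENNReal.ofReal (4 * L / n)} := by
  have := isProbabilityMeasure_bern hp.le hp1.le
  have h1p : 0 < 1 - p := by linarith
  have hc : 0 < p * (1 - p) := mul_pos hp h1p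
  have hn' : (0 : ℝ) < n := pos_of_mul_pos_left (by linarith) hc.le
  set ε := √(9 * (p * (1 - p)) * L / (4 * n))
  have hε_sq : ε ^ 2 = 9 * (p * (1 - p)) * L / (4 * n) := sq_sqrt (by positivity)
  have hε : 0 < ε := sqrt_pos.mpr (by positivity)
  have hεc : ε ≤ p * (1 - p) / 4 :=
    (sqrt_le_left (by positivity)).mpr (by rw [div_le_iff₀ (by positivity)]; nlinarith)
  have hεp : ε ≤ p / 4 := hεc.trans (by nlinarith)
  have hε1p : ε ≤ (1 - p) / 4 := hεc.trans (by nlinarith)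
  have hconc := le_measureReal_abs_mean_sub_lt hε hεp hε1p (Nat.cast_pos.mp hn')
  rw [show n * (4 * ε ^ 2 / (9 * (p * (1 - p)))) = L by rw [hε_sq]; field_simp] at hconc
  refine (ENNReal.ofReal_le_ofReal hconc).trans ?_
  rw [ofReal_measureReal]
  refine measure_mono fun x (hx : |(∑ i, x i) / n - p| < ε) => ?_
  obtain ⟨hm1, hm2⟩ := abs_lt.mp hx
  rw [Set.mem_ofPred_eq, klBerE_of_mem_Ioo ⟨by linarith, by linarith⟩]
  refine ENNReal.ofReal_le_ofReal ((klBer_le_of_abs_sub_lt hx hεp hε1p).trans_eq ?_)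
  rw [hε_sq]; field_simp; ring

/-- reversed KL-based Bernoulli concentration bound, with universal constants. -/
theorem stmt14 :
    ∃ c₁ c₂ : ℝ, 0 < c₁ ∧ 0 < c₂ ∧
      ∀ (p δ : ℝ), p ∈ Set.Ioo (0 : ℝ) 1 → δ ∈ Set.Ioo (0 : ℝ) 1 →
      ∀ n : ℕ, c₁ * Real.log (2 / δ) / (p * (1 - p)) ≤ (n : ℝ) →
      ∀ (Ω : Type u) (_ : MeasurableSpace Ω) (P : Measure Ω), IsProbabilityMeasure P →
      ∀ y : Fin n → Ω → ℝ,
        Measure.map (fun ω => fun i => y i ω) P = Measure.pi (fun _ : Fin n => bern p) →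
        ENNReal.ofReal (1 - δ) ≤
          P {ω | klBerE p ((∑ i, y i ω) / n) ≤ ENNReal.ofReal (c₂ * Real.log (2 / δ) / n)} := by
  refine ⟨36, 4, by norm_num, by norm_num, ?_⟩
  rintro p δ ⟨hp, hp1⟩ ⟨hδ, hδ1⟩ n hn Ω _ P _ y hmap
  have := isProbabilityMeasure_bern hp.le hp1.le
  have hL : 0 < log (2 / δ) := log_pos ((lt_div_iff₀ hδ).mpr (by linarith))
  have hY : AEMeasurable (fun ω i => y i ω) P :=
    AEMeasurable.of_map_ne_zero (by rw [hmap]; exact IsProbabilityMeasure.ne_zero _)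
  have hS : MeasurableSet
      {x : Fin n → ℝ | klBerE p ((∑ i, x i) / n) ≤ ENNReal.ofReal (4 * log (2 / δ) / n)} :=
    measurableSet_le ((measurable_klBerE p).comp (by fun_prop)) measurable_const
  calc ENNReal.ofReal (1 - δ) = ENNReal.ofReal (1 - 2 * exp (-log (2 / δ))) := by
        rw [exp_neg, exp_log (by positivity), inv_div, mul_div_cancel₀ _ two_ne_zero]
    _ ≤ Measure.pi (fun _ : Fin n => bern p)
          {x | klBerE p ((∑ i, x i) / n) ≤ ENNReal.ofReal (4 * log (2 / δ) / n)} :=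
        le_pi_bern_klBerE_mean_le hp hp1 hL ((div_le_iff₀ (mul_pos hp (by linarith))).mp hn)
    _ = _ := by rw [← hmap, Measure.map_apply_of_aemeasurable hY hS]; rfl
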